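/- Let F be a field, 1 ≤ b ≤ k, n ≥ 1, U ∈ F^{k×b}, V ∈ F^{k×n}, and suppose (U,V) is MDSb(1), i.e. for every σ ∈ {0,…,b} and A ⊆ {1,…,n}, dim(U_{≤σ} + V_A) = min(σ + |A|, k). Then for every ℓ ≥ 1 and every proper configuration (σ_1,A_1),…,(σ_ℓ,A_ℓ) (σ_i ∈ {0,…,b}, A_i ⊆ {1,…,n}, σ_i + |A_i| ≤ k), we have dim(⋂_{i=1}^ℓ (U_{≤σ_i} + V_{A_i})) ≥ gid_k((σ_i,A_i)_i), where gid_k((σ_i,A_i)_i) is the dimension of the corresponding intersection ⋂_{i=1}^ℓ (W_{≤σ_i} + W'_{A_i}) for generic matrices W, W'. -/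

import Mathlib

/-!
For any partition of the configuration into parts `P`, the intersection over `i` contains the
intersection over the parts of `U_{≤ min_P σ} + V_{⋂_P A}`. Each of these part spaces is again
proper, so MDSb(1) gives its dimension exactly as `min_P σ + |⋂_P A|`, and intersecting `s`
subspaces of `F^k` loses at most `(s - 1) k` dimensions. Maximising over partitions gives `gid_k`.
-/

open Finset Matrix

noncomputable section

/-- The intersection `⋂_{j ∈ p} A j`, as a `Finset (Fin n)`. -/
def interSet {ℓ n : ℕ} (A : Fin ℓ → Finset (Fin n)) (p : Finset (Fin ℓ)) : Finset (Fin n) :=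
  Finset.univ.filter fun x => ∀ j ∈ p, x ∈ A j

/-- The dimension-`m` null intersection property: for every partition of `{1,…,ℓ}`
(presented as a `Finpartition` of `Finset.univ : Finset (Fin ℓ)`) into nonempty parts
`P_1,…,P_s`, we have `Σ_i |⋂_{j ∈ P_i} A_j| ≤ (s-1)·m`. -/
def NullInter {ℓ n : ℕ} (m : ℕ) (A : Fin ℓ → Finset (Fin n)) : Prop :=
  ∀ P : Finpartition (Finset.univ : Finset (Fin ℓ)),
    ∑ p ∈ P.parts, (interSet A p).card ≤ (P.parts.card - 1) * m

/-- Span of the columns of `M` indexed by `A`. -/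
def colSpan {K : Type*} [Field K] {k n : ℕ} (M : Matrix (Fin k) (Fin n) K)
    (A : Finset (Fin n)) : Submodule K (Fin k → K) :=
  Submodule.span K ((fun j i => M i j) '' (A : Set (Fin n)))

/-- Span of the first `σ` columns of `M`. -/
def colSpanLT {K : Type*} [Field K] {k b : ℕ} (M : Matrix (Fin k) (Fin b) K)
    (σ : ℕ) : Submodule K (Fin k → K) :=
  Submodule.span K ((fun j i => M i j) '' {j : Fin b | (j : ℕ) < σ})

/-- The minimum of `σ` over the set `p` (for nonempty `p`, this is `min_{j ∈ p} σ j`). -/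
def partMin {ℓ : ℕ} (σ : Fin ℓ → ℕ) (p : Finset (Fin ℓ)) : ℕ :=
  sInf (σ '' (p : Set (Fin ℓ)))

/-- The generic intersection dimension `gid_m((σ_i, A_i)_i)`: the maximum over all
partitions of `{1,…,ℓ}` into nonempty parts `P_1,…,P_s` of
`-m(s-1) + Σ_i (min_{j ∈ P_i} σ_j + |⋂_{j ∈ P_i} A_j|)`. -/
def gid {ℓ n : ℕ} (m : ℕ) (σ : Fin ℓ → ℕ) (A : Fin ℓ → Finset (Fin n)) : ℤ :=
  sSup { v : ℤ | ∃ P : Finpartition (Finset.univ : Finset (Fin ℓ)),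
    v = -(m : ℤ) * ((P.parts.card : ℤ) - 1)
      + ∑ p ∈ P.parts, ((partMin σ p : ℤ) + ((interSet A p).card : ℤ)) }

open Module

namespace Submodule

variable {K E : Type*} [Field K] [AddCommGroup E] [Module K E] [FiniteDimensional K E]

theorem finrank_add_finrank_sub_le_finrank_inf (X Y : Submodule K E) :
    (finrank K X : ℤ) + finrank K Y - finrank K E ≤ finrank K ↥(X ⊓ Y) := by
  have := finrank_sup_add_finrank_inf_eq X Y
  have := finrank_le (X ⊔ Y)
  omega

theorem sum_finrank_sub_le_finrank_biInf {ι : Type*} [DecidableEq ι] (s : Finset ι)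
    (W : ι → Submodule K E) :
    ∑ p ∈ s, (finrank K (W p) : ℤ) - ((#s : ℤ) - 1) * finrank K E ≤
      finrank K ↥(⨅ p ∈ s, W p) := by
  induction s using Finset.induction_on with
  | empty =>
    rw [show ⨅ p ∈ (∅ : Finset ι), W p = ⊤ by simp, finrank_top]
    simp
  | insert a s ha ih =>
    rw [Finset.iInf_insert, sum_insert ha, card_insert_of_notMem ha]
    have := finrank_add_finrank_sub_le_finrank_inf (W a) (⨅ p ∈ s, W p)
    push_cast
    linarith

end Submodule

section ColumnSpans

variable {F : Type*} [Field F] {k b n ℓ : ℕ}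

theorem colSpan_mono (V : Matrix (Fin k) (Fin n) F) {A B : Finset (Fin n)} (h : A ⊆ B) :
    colSpan V A ≤ colSpan V B :=
  Submodule.span_mono (Set.image_mono (by exact_mod_cast h))

theorem colSpanLT_mono (U : Matrix (Fin k) (Fin b) F) {σ τ : ℕ} (h : σ ≤ τ) :
    colSpanLT U σ ≤ colSpanLT U τ :=
  Submodule.span_mono (Set.image_mono fun _ hj => lt_of_lt_of_le hj h)

theorem partMin_le (σ : Fin ℓ → ℕ) {p : Finset (Fin ℓ)} {j : Fin ℓ} (hj : j ∈ p) :
    partMin σ p ≤ σ j :=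
  Nat.sInf_le ⟨j, hj, rfl⟩

theorem interSet_subset (A : Fin ℓ → Finset (Fin n)) {p : Finset (Fin ℓ)} {j : Fin ℓ}
    (hj : j ∈ p) : interSet A p ⊆ A j :=
  fun _ hx => (mem_filter.mp hx).2 j hj

variable (U : Matrix (Fin k) (Fin b) F) (V : Matrix (Fin k) (Fin n) F)
  (σ : Fin ℓ → ℕ) (A : Fin ℓ → Finset (Fin n))

theorem partSpan_le {p : Finset (Fin ℓ)} {j : Fin ℓ} (hj : j ∈ p) :
    colSpanLT U (partMin σ p) ⊔ colSpan V (interSet A p) ≤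
      colSpanLT U (σ j) ⊔ colSpan V (A j) :=
  sup_le_sup (colSpanLT_mono U (partMin_le σ hj)) (colSpan_mono V (interSet_subset A hj))

theorem biInf_partSpan_le_iInf (P : Finpartition (univ : Finset (Fin ℓ))) :
    ⨅ p ∈ P.parts, colSpanLT U (partMin σ p) ⊔ colSpan V (interSet A p) ≤
      ⨅ i, colSpanLT U (σ i) ⊔ colSpan V (A i) :=
  le_iInf fun i =>
    let ⟨p, hp, hip⟩ := P.exists_mem (mem_univ i)
    iInf₂_le_of_le p hp (partSpan_le U V σ A hip)

theorem finrank_partSpan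
    (hMDS : ∀ τ : ℕ, τ ≤ b → ∀ B : Finset (Fin n),
      finrank F ↥(colSpanLT U τ ⊔ colSpan V B) = min (τ + #B) k)
    (hσb : ∀ i, σ i ≤ b) (hproper : ∀ i, σ i + (A i).card ≤ k)
    {p : Finset (Fin ℓ)} {j : Fin ℓ} (hj : j ∈ p) :
    finrank F ↥(colSpanLT U (partMin σ p) ⊔ colSpan V (interSet A p)) =
      partMin σ p + #(interSet A p) := by
  have hmin := partMin_le σ hj
  have hcard := card_le_card (interSet_subset A hj)
  rw [hMDS _ (hmin.trans (hσb j)), min_eq_left (by linarith [hproper j])]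

end ColumnSpans

theorem MDSb_one_intersection_ge_gid_general
    (F : Type*) [Field F] (b k n : ℕ)
    (U : Matrix (Fin k) (Fin b) F) (V : Matrix (Fin k) (Fin n) F)
    (hMDSb1 : ∀ σ : ℕ, σ ≤ b → ∀ A : Finset (Fin n),
      Module.finrank F ↥(colSpanLT U σ ⊔ colSpan V A) = min (σ + A.card) k) :
    ∀ ℓ : ℕ, 1 ≤ ℓ → ∀ (σ : Fin ℓ → ℕ) (A : Fin ℓ → Finset (Fin n)),
      (∀ i, σ i ≤ b) → (∀ i, σ i + (A i).card ≤ k) →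
      gid k σ A ≤
        (Module.finrank F ↥(⨅ i, colSpanLT U (σ i) ⊔ colSpan V (A i)) : ℤ) := by
  intro ℓ _ σ A hσb hproper
  refine csSup_le ⟨_, ⊥, rfl⟩ ?_
  rintro v ⟨P, rfl⟩
  have hrank : ∀ p ∈ P.parts,
      (finrank F ↥(colSpanLT U (partMin σ p) ⊔ colSpan V (interSet A p)) : ℤ) =
        partMin σ p + #(interSet A p) := fun p hp => by
    obtain ⟨j, hj⟩ := P.nonempty_of_mem_parts hp
    exact_mod_cast finrank_partSpan U V σ A hMDSb1 hσb hproper hj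
  calc -(k : ℤ) * (#P.parts - 1) + ∑ p ∈ P.parts, ((partMin σ p : ℤ) + #(interSet A p))
      = ∑ p ∈ P.parts,
          (finrank F ↥(colSpanLT U (partMin σ p) ⊔ colSpan V (interSet A p)) : ℤ) -
          (#P.parts - 1) * finrank F (Fin k → F) := by
        rw [sum_congr rfl hrank, Module.finrank_fin_fun]
        ring
    _ ≤ finrank F
          ↥(⨅ p ∈ P.parts, colSpanLT U (partMin σ p) ⊔ colSpan V (interSet A p)) :=
        Submodule.sum_finrank_sub_le_finrank_biInf _ _
    _ ≤ _ := by
        exact_mod_cast Submodule.finrank_mono (biInf_partSpan_le_iInf U V σ A P)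

/-- For an `MDSb(1)` pair `(U, V)`, the dimension of every proper-configuration
intersection is at least the generic value `gid_k`. -/
theorem MDSb_one_intersection_ge_gid
    (F : Type*) [Field F] (b k n : ℕ) (hb : 1 ≤ b) (hbk : b ≤ k) (hn : 1 ≤ n)
    (U : Matrix (Fin k) (Fin b) F) (V : Matrix (Fin k) (Fin n) F)
    (hMDSb1 : ∀ σ : ℕ, σ ≤ b → ∀ A : Finset (Fin n),
      Module.finrank F ↥(colSpanLT U σ ⊔ colSpan V A) = min (σ + A.card) k) :
    ∀ ℓ : ℕ, 1 ≤ ℓ → ∀ (σ : Fin ℓ → ℕ) (A : Fin ℓ → Finset (Fin n)),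
      (∀ i, σ i ≤ b) → (∀ i, σ i + (A i).card ≤ k) →
      gid k σ A ≤
        (Module.finrank F ↥(⨅ i, colSpanLT U (σ i) ⊔ colSpan V (A i)) : ℤ) :=
  MDSb_one_intersection_ge_gid_general F b k n U V hMDSb1
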